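/- For a symmetric positive definite real n×n matrix A, t > 0, c ∈ ℝ, b ∈ ℝⁿ, unit vector ℓ, and conjugate exponents p, p' with 1 < p' < ∞, one has the identity (1/(2t(2√(πt))ⁿ det A^{1/2})) · (∫_{ℝⁿ} |(A⁻¹z, ℓ)|^{p'} e^{-p'|A^{-1/2}z|²/(4t)} dz)^{1/p'} = |A^{-1/2}ℓ| / (2ⁿπ^{(n+p-1)/2} det A^{1/2})^{1/p} · (Γ((p'+1)/2)/p'^{(n+p')/2})^{1/p'} · 1/t^{(n+p)/(2p)}. -/

import Mathlib

/-!
Substituting `z = S y` (Jacobian `det S`) turns the integrand into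
`|(y, S⁻¹ℓ)|^{p'} e^{-a|y|²}` with `a = p'/(4t)`. After a rotation taking `S⁻¹ℓ` to a multiple
of a coordinate vector, the Gaussian integral factors into the one-dimensional absolute moment
`∫ |s|^{p'} e^{-a s²} ds = a^{-(p'+1)/2} Γ((p'+1)/2)` and `n - 1` Gaussian integrals `√(π/a)`.
What remains is bookkeeping of exponents, with `p = p'/(p' - 1)`.
-/

open MeasureTheory Real Matrix

theorem integral_comp_mulVec {ι F : Type*} [Fintype ι] [DecidableEq ι] [NormedAddCommGroup F]
    [NormedSpace ℝ F] {M : Matrix ι ι ℝ} (hM : M.det ≠ 0) (g : (ι → ℝ) → F) :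
    ∫ y, g (M *ᵥ y) = |M.det|⁻¹ • ∫ z, g z := by
  let e := (M.toLinearEquiv' (M.invertibleOfIsUnitDet hM.isUnit)).toContinuousLinearEquiv
  have hemb : MeasurableEmbedding (toLin' M) := e.toHomeomorph.measurableEmbedding
  change ∫ y, g (toLin' M y) = _
  rw [← hemb.integral_map, map_matrix_volume_pi_eq_smul_volume_pi hM, integral_smul_measure,
    ENNReal.toReal_ofReal (by positivity), abs_inv]

theorem Matrix.PosDef.integral_inv_mulVec_eq_det_mul_integral {ι : Type*} [Fintype ι]
    [DecidableEq ι] {S : Matrix ι ι ℝ} (hS : S.PosDef) (ℓ : ι → ℝ) (F : ℝ → ℝ → ℝ) :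
    ∫ z, F ((S * S)⁻¹ *ᵥ z ⬝ᵥ ℓ) (S⁻¹ *ᵥ z ⬝ᵥ S⁻¹ *ᵥ z) =
      S.det * ∫ y, F (y ⬝ᵥ S⁻¹ *ᵥ ℓ) (y ⬝ᵥ y) := by
  have hdet : IsUnit S.det := hS.det_pos.ne'.isUnit
  have hsymm : S⁻¹ᵀ = S⁻¹ := by
    rw [transpose_nonsing_inv, show Sᵀ = S from hS.isHermitian.eq]
  have hinv (y : ι → ℝ) : S⁻¹ *ᵥ (S *ᵥ y) = y := by
    rw [mulVec_mulVec, nonsing_inv_mul S hdet, one_mulVec]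
  have hdot (y : ι → ℝ) : (S * S)⁻¹ *ᵥ (S *ᵥ y) ⬝ᵥ ℓ = y ⬝ᵥ S⁻¹ *ᵥ ℓ := by
    rw [mul_inv_rev, ← mulVec_mulVec, hinv, dotProduct_comm, dotProduct_mulVec,
      ← mulVec_transpose, hsymm, dotProduct_comm]
  have := integral_comp_mulVec hS.det_pos.ne'
    fun z => F ((S * S)⁻¹ *ᵥ z ⬝ᵥ ℓ) (S⁻¹ *ᵥ z ⬝ᵥ S⁻¹ *ᵥ z)
  simp only [hdot, hinv, abs_of_pos hS.det_pos, smul_eq_mul] at this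
  rw [this, mul_inv_cancel_left₀ hS.det_pos.ne']

theorem integral_abs_rpow_mul_exp_neg_mul_sq {b q : ℝ} (hb : 0 < b) (hq : -1 < q) :
    ∫ x : ℝ, |x| ^ q * exp (-b * x ^ 2) = b ^ (-(q + 1) / 2) * Gamma ((q + 1) / 2) := by
  have h := integral_comp_abs (f := fun y : ℝ => y ^ q * exp (-b * y ^ 2))
  simp only [sq_abs] at h
  rw [h]
  simp_rw [← rpow_two]
  rw [integral_rpow_mul_exp_neg_mul_rpow two_pos hq hb]
  ring

theorem integral_abs_apply_rpow_mul_exp_neg_mul_sum_sq {ι : Type*} [Fintype ι] (i₀ : ι)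
    {a q : ℝ} (ha : 0 < a) (hq : -1 < q) :
    ∫ w : ι → ℝ, |w i₀| ^ q * exp (-a * ∑ i, w i ^ 2) =
      a ^ (-(q + 1) / 2) * Gamma ((q + 1) / 2) * √(π / a) ^ (Fintype.card ι - 1) := by
  classical
  let g : ι → ℝ → ℝ := fun i s => (if i = i₀ then |s| ^ q else 1) * exp (-a * s ^ 2)
  have hprod (w : ι → ℝ) : |w i₀| ^ q * exp (-a * ∑ i, w i ^ 2) = ∏ i, g i (w i) := by
    simp only [g, Finset.prod_mul_distrib, Finset.prod_ite_eq', Finset.mem_univ, if_true,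
      Finset.mul_sum, exp_sum]
  have hfactor (i : ι) : ∫ s, g i s =
      if i = i₀ then a ^ (-(q + 1) / 2) * Gamma ((q + 1) / 2) else √(π / a) := by
    split_ifs with h
    · simp only [g, h, if_true, integral_abs_rpow_mul_exp_neg_mul_sq ha hq]
    · simp only [g, h, if_false, one_mul, integral_gaussian]
  simp_rw [hprod, integral_fintype_prod_volume_eq_prod, hfactor]
  rw [Fintype.prod_eq_mul_prod_compl i₀, if_pos rfl,
    Finset.prod_congr rfl fun i hi => if_neg (by simpa using hi), Finset.prod_const,
    Finset.card_compl, Finset.card_singleton]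

section InnerProductSpace

open scoped RealInnerProductSpace

variable {E : Type*} [NormedAddCommGroup E] [InnerProductSpace ℝ E] [FiniteDimensional ℝ E]
  [MeasurableSpace E] [BorelSpace E]

theorem integral_comp_inner_unit_norm_sq {u : E} (hu : ‖u‖ = 1) (i₀ : Fin (Module.finrank ℝ E))
    (F : ℝ → ℝ → ℝ) :
    ∫ x : E, F ⟪x, u⟫ (‖x‖ ^ 2) = ∫ w : Fin (Module.finrank ℝ E) → ℝ, F (w i₀) (∑ i, w i ^ 2) := by
  have hortho : Orthonormal ℝ (({i₀} : Set (Fin (Module.finrank ℝ E))).domRestrict fun _ => u) :=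
    ⟨fun _ => hu, fun i j hij => absurd (Subsingleton.elim i j) hij⟩
  obtain ⟨b, hb⟩ := hortho.exists_orthonormalBasis_extension_of_card_eq (by simp)
  rw [← b.measurePreserving_measurableEquiv.symm.integral_comp',
    ← (EuclideanSpace.volume_preserving_symm_measurableEquiv_toLp _).symm.integral_comp']
  congr 1 with w
  have hinner : ⟪b.repr.symm (WithLp.toLp 2 w), u⟫ = w i₀ := by
    rw [← hb i₀ rfl, real_inner_comm, ← b.repr_apply_apply, LinearIsometryEquiv.apply_symm_apply]
  have hnorm : ‖b.repr.symm (WithLp.toLp 2 w)‖ ^ 2 = ∑ i, w i ^ 2 := by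
    simp [EuclideanSpace.norm_sq_eq]
  simp only [MeasurableEquiv.symm_symm]
  exact congrArg₂ F hinner hnorm

theorem integral_abs_inner_rpow_mul_exp_neg_mul_sq {a q : ℝ} (ha : 0 < a) (hq : -1 < q) {v : E}
    (hv : v ≠ 0) :
    ∫ x : E, |⟪x, v⟫| ^ q * exp (-a * ‖x‖ ^ 2) =
      ‖v‖ ^ q * (a ^ (-(q + 1) / 2) * Gamma ((q + 1) / 2) *
        √(π / a) ^ (Module.finrank ℝ E - 1)) := by
  have : Nontrivial E := ⟨⟨v, 0, hv⟩⟩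
  have hv' : 0 < ‖v‖ := norm_pos_iff.2 hv
  have hu : ‖‖v‖⁻¹ • v‖ = 1 := by rw [norm_smul, norm_inv, norm_norm, inv_mul_cancel₀ hv'.ne']
  have hscale (x : E) : |⟪x, v⟫| ^ q = ‖v‖ ^ q * |⟪x, ‖v‖⁻¹ • v⟫| ^ q := by
    rw [real_inner_smul_right, abs_mul, abs_inv, abs_norm, mul_rpow (by positivity) (abs_nonneg _),
      inv_rpow (norm_nonneg _), mul_inv_cancel_left₀ (by positivity)]
  simp_rw [hscale, mul_assoc (‖v‖ ^ q), integral_const_mul]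
  rw [integral_comp_inner_unit_norm_sq (F := fun s r => |s| ^ q * exp (-a * r)) hu
    ⟨0, Module.finrank_pos⟩, integral_abs_apply_rpow_mul_exp_neg_mul_sum_sq _ ha hq,
    Fintype.card_fin]

end InnerProductSpace

theorem integral_abs_dotProduct_rpow_mul_exp_neg_mul_dotProduct {ι : Type*} [Fintype ι]
    {a q : ℝ} (ha : 0 < a) (hq : -1 < q) {v : ι → ℝ} (hv : v ≠ 0) :
    ∫ y : ι → ℝ, |y ⬝ᵥ v| ^ q * exp (-a * (y ⬝ᵥ y)) =
      √(v ⬝ᵥ v) ^ q * (a ^ (-(q + 1) / 2) * Gamma ((q + 1) / 2) *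
        √(π / a) ^ (Fintype.card ι - 1)) := by
  have hnorm_sq (x : EuclideanSpace ℝ ι) : ‖x‖ ^ 2 = x.ofLp ⬝ᵥ x.ofLp := by
    rw [EuclideanSpace.norm_sq_eq]
    simp only [dotProduct, Real.norm_eq_abs, sq_abs, ← sq]
  have hnorm_v : ‖WithLp.toLp 2 v‖ = √(v ⬝ᵥ v) := by
    rw [← hnorm_sq, sqrt_sq (norm_nonneg _)]
  have hmoment := integral_abs_inner_rpow_mul_exp_neg_mul_sq ha hq (v := WithLp.toLp 2 v)
    (by simpa using hv)
  simp only [hnorm_sq, hnorm_v, finrank_euclideanSpace, EuclideanSpace.inner_eq_star_dotProduct,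
    star_trivial, dotProduct_comm v] at hmoment
  rw [← (EuclideanSpace.volume_preserving_symm_measurableEquiv_toLp ι).integral_comp', ← hmoment]
  rfl

theorem sharp_coefficient_algebra {n : ℕ} (hn : 1 ≤ n) {p p' t D N G : ℝ} (hp' : 1 < p')
    (hpp' : 1 / p + 1 / p' = 1) (ht : 0 < t) (hD : 0 < D) (hN : 0 < N) (hG : 0 < G) :
    1 / (2 * t * (2 * √(π * t)) ^ n * D) *
        (D * (N ^ p' * ((p' / (4 * t)) ^ (-(p' + 1) / 2) * G *
          √(π / (p' / (4 * t))) ^ (n - 1)))) ^ (1 / p') =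
      N / (2 ^ n * π ^ (((n : ℝ) + p - 1) / 2) * D) ^ (1 / p) *
        (G / p' ^ (((n : ℝ) + p') / 2)) ^ (1 / p') * (1 / t ^ (((n : ℝ) + p) / (2 * p))) := by
  have hp'0 : 0 < p' := by linarith
  have hp : p = p' / (p' - 1) := by
    have hp0 : p ≠ 0 := by
      rintro rfl
      simp only [div_zero, zero_add, div_eq_one_iff_eq hp'0.ne'] at hpp'
      linarith
    rw [eq_div_iff (by linarith)]
    field_simp at hpp'
    linarith
  have hcast : ((n - 1 : ℕ) : ℝ) = n - 1 := by rw [Nat.cast_sub hn, Nat.cast_one]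
  have hlog4 : log 4 = 2 * log 2 := by
    rw [show (4 : ℝ) = 2 ^ 2 by norm_num, log_pow, Nat.cast_ofNat]
  subst hp
  have : 0 < p' / (p' - 1) := div_pos hp'0 (by linarith)
  refine log_injOn_pos (Set.mem_Ioi.2 (by positivity)) (Set.mem_Ioi.2 (by positivity)) ?_
  simp (disch := positivity) only [one_div, log_mul, log_div, log_inv, log_pow, log_rpow,
    log_sqrt]
  rw [hlog4, hcast]
  have : p' - 1 ≠ 0 := by linarith
  field_simp
  ring

theorem sharp_coefficient_identity_general (n : ℕ) (A S : Matrix (Fin n) (Fin n) ℝ)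
    (hS : S.PosDef) (hSA : S * S = A)
    (ℓ : Fin n → ℝ) (hℓ : ℓ ⬝ᵥ ℓ = 1)
    (p p' : ℝ) (hp : 1 < p') (hpp' : 1 / p + 1 / p' = 1)
    (t : ℝ) (ht : 0 < t) :
    1 / (2 * t * (2 * Real.sqrt (π * t)) ^ n * S.det) *
        (∫ z : Fin n → ℝ, |A⁻¹.mulVec z ⬝ᵥ ℓ| ^ p' *
          Real.exp (-(p' * (S⁻¹.mulVec z ⬝ᵥ S⁻¹.mulVec z)) / (4 * t))) ^ (1 / p') =
      Real.sqrt (S⁻¹.mulVec ℓ ⬝ᵥ S⁻¹.mulVec ℓ) /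
          ((2 ^ n * π ^ (((n : ℝ) + p - 1) / 2) * S.det) ^ (1 / p)) *
        (Real.Gamma ((p' + 1) / 2) / p' ^ (((n : ℝ) + p') / 2)) ^ (1 / p') *
        (1 / t ^ (((n : ℝ) + p) / (2 * p))) := by
  subst hSA
  have hℓ0 : ℓ ≠ 0 := by
    rintro rfl
    simp at hℓ
  have hn : 1 ≤ n := Nat.one_le_iff_ne_zero.2 <| by
    rintro rfl
    exact hℓ0 (Subsingleton.elim _ _)
  have hv : S⁻¹ *ᵥ ℓ ≠ 0 := fun h => hℓ0 <| by
    simpa [mulVec_mulVec, mul_nonsing_inv S hS.det_pos.ne'.isUnit] using congrArg (S *ᵥ ·) h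
  have hexp (r : ℝ) : -(p' * r) / (4 * t) = -(p' / (4 * t)) * r := by ring
  simp_rw [hexp]
  rw [hS.integral_inv_mulVec_eq_det_mul_integral ℓ fun s r => |s| ^ p' * exp (-(p' / (4 * t)) * r),
    integral_abs_dotProduct_rpow_mul_exp_neg_mul_dotProduct (by positivity) (by linarith) hv,
    Fintype.card_fin]
  exact sharp_coefficient_algebra hn hp hpp' ht hS.det_pos
    (sqrt_pos.2 (dotProduct_star_self_pos_iff.2 hv)) (Gamma_pos_of_pos (by linarith))

/-- The key identity computing the sharp coefficient `K_{p,ℓ}(t)`: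
`(2t(2√(πt))ⁿ det A^{1/2})⁻¹ (∫ |(A⁻¹z,ℓ)|^{p'} e^{-p'|A^{-1/2}z|²/(4t)} dz)^{1/p'}
 = |A^{-1/2}ℓ| (2ⁿπ^{(n+p-1)/2} det A^{1/2})^{-1/p} (Γ((p'+1)/2)/p'^{(n+p')/2})^{1/p'}
   t^{-(n+p)/(2p)}`. Here `S` plays the role of `A^{1/2}`. -/
theorem sharp_coefficient_identity (n : ℕ) (A S : Matrix (Fin n) (Fin n) ℝ)
    (hAsymm : A.IsSymm) (hA : A.PosDef) (hS : S.PosDef) (hSA : S * S = A)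
    (b : Fin n → ℝ) (c : ℝ) (ℓ : Fin n → ℝ) (hℓ : ℓ ⬝ᵥ ℓ = 1)
    (p p' : ℝ) (hp : 1 < p') (hpp' : 1 / p + 1 / p' = 1)
    (t : ℝ) (ht : 0 < t) :
    1 / (2 * t * (2 * Real.sqrt (π * t)) ^ n * S.det) *
        (∫ z : Fin n → ℝ, |A⁻¹.mulVec z ⬝ᵥ ℓ| ^ p' *
          Real.exp (-(p' * (S⁻¹.mulVec z ⬝ᵥ S⁻¹.mulVec z)) / (4 * t))) ^ (1 / p') =
      Real.sqrt (S⁻¹.mulVec ℓ ⬝ᵥ S⁻¹.mulVec ℓ) /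
          ((2 ^ n * π ^ (((n : ℝ) + p - 1) / 2) * S.det) ^ (1 / p)) *
        (Real.Gamma ((p' + 1) / 2) / p' ^ (((n : ℝ) + p') / 2)) ^ (1 / p') *
        (1 / t ^ (((n : ℝ) + p) / (2 * p))) :=
  sharp_coefficient_identity_general n A S hS hSA ℓ hℓ p p' hp hpp' t ht
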